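/- The derivative subgroup is closed under multiplication: let f and v be formal power series over ℚ with zero constant coefficient, and for power series G, F with F(0)=0 define T(G,F)(n,k) = (n!/k!)·(coefficient of X^n in G·F^k). Then for all natural numbers n and k, ∑_{j=0}^{n} T(f', f)(n,j) · T(v', v)(j,k) = T((v∘f)', v∘f)(n,k), where f' denotes the formal derivative of f and v∘f denotes substitution of f into v. -/

import Mathlib

open PowerSeries Finset

/-- Substitution (composition) of formal power series: `substPS f u = u ∘ f`,
the usual composition `∑ₙ uₙ fⁿ`, well-defined coefficient-wise when `f` has zero
constant coefficient. -/
noncomputable def substPS (f u : PowerSeries ℚ) : PowerSeries ℚ :=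
  PowerSeries.mk fun n => ∑ j ∈ Finset.range (n + 1),
    (PowerSeries.coeff j u) * PowerSeries.coeff n (f ^ j)

/-- The `(n,k)` entry of the exponential Riordan array `[G, F]`. -/
noncomputable def riordanEntry (G F : PowerSeries ℚ) (n k : ℕ) : ℚ :=
  ((n.factorial : ℚ) / (k.factorial : ℚ)) * PowerSeries.coeff n (G * F ^ k)

lemma coeff_pow_zero_of_lt (f : PowerSeries ℚ) (hf : constantCoeff f = 0)
    {n j : ℕ} (h : n < j) : coeff n (f ^ j) = 0 := by
  have hx : (X : PowerSeries ℚ) ∣ f := X_dvd_iff.mpr hf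
  exact (X_pow_dvd_iff.mp (pow_dvd_pow_of_dvd hx j)) n h

lemma coeff_aeval (f : PowerSeries ℚ) (hf : constantCoeff f = 0) (P : Polynomial ℚ) (n : ℕ) :
    coeff n (Polynomial.aeval f P) = ∑ j ∈ range (n+1), P.coeff j * coeff n (f ^ j) := by
  set N := max (n+1) (P.natDegree + 1) with hN
  have hdeg : P.natDegree < N := lt_of_lt_of_le (Nat.lt_succ_self _) (le_max_right _ _)
  rw [Polynomial.aeval_eq_sum_range' hdeg, map_sum]
  have : ∀ j ∈ range N, coeff n (P.coeff j • f ^ j) = P.coeff j * coeff n (f ^ j) := by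
    intro j _; rw [coeff_smul, smul_eq_mul]
  rw [Finset.sum_congr rfl this]
  refine (Finset.sum_subset (Finset.range_subset_range.mpr (le_max_left _ _)) ?_).symm
  intro j hj hj'
  have : n < j := by
    simp only [mem_range, not_lt] at hj'
    omega
  rw [coeff_pow_zero_of_lt f hf this, mul_zero]

lemma coeff_substPS_eq (f : PowerSeries ℚ) (hf : constantCoeff f = 0) (u : PowerSeries ℚ)
    {n N : ℕ} (h : n < N) :
    coeff n (substPS f u) = coeff n (Polynomial.aeval f (trunc N u)) := by
  rw [coeff_aeval f hf, substPS, coeff_mk]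
  refine Finset.sum_congr rfl fun j hj => ?_
  rw [coeff_trunc]
  have : j < N := by simp only [mem_range] at hj; omega
  rw [if_pos this]

lemma substPS_mul (f : PowerSeries ℚ) (hf : constantCoeff f = 0) (u w : PowerSeries ℚ) :
    substPS f (u * w) = substPS f u * substPS f w := by
  ext n
  rw [coeff_substPS_eq f hf (u*w) (Nat.lt_succ_self n)]
  have htr : ∀ j ∈ range (n+1),
      (trunc (n+1) (u*w)).coeff j * coeff n (f^j)
        = (trunc (n+1) u * trunc (n+1) w).coeff j * coeff n (f^j) := by
    intro j hj
    simp only [mem_range] at hj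
    congr 1
    rw [coeff_trunc, if_pos hj, Polynomial.coeff_mul, PowerSeries.coeff_mul]
    refine Finset.sum_congr rfl fun p hp => ?_
    rw [Finset.HasAntidiagonal.mem_antidiagonal] at hp
    rw [coeff_trunc, coeff_trunc, if_pos (by omega), if_pos (by omega)]
  rw [coeff_aeval f hf, Finset.sum_congr rfl htr, ← coeff_aeval f hf, map_mul,
    PowerSeries.coeff_mul, PowerSeries.coeff_mul]
  refine Finset.sum_congr rfl fun p hp => ?_
  rw [Finset.HasAntidiagonal.mem_antidiagonal] at hp
  rw [← coeff_substPS_eq f hf u (by omega), ← coeff_substPS_eq f hf w (by omega)]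

lemma substPS_one (f : PowerSeries ℚ) : substPS f 1 = 1 := by
  ext n
  rw [substPS, coeff_mk]
  rw [Finset.sum_eq_single 0]
  · simp
  · intro j hj hj0
    rw [coeff_one, if_neg hj0, zero_mul]
  · simp

lemma substPS_pow (f : PowerSeries ℚ) (hf : constantCoeff f = 0) (v : PowerSeries ℚ) (m : ℕ) :
    substPS f (v ^ m) = (substPS f v) ^ m := by
  induction m with
  | zero => simpa using substPS_one f
  | succ m ih => rw [pow_succ, pow_succ, substPS_mul f hf, ih]

lemma coeff_deriv_mul_pow (a : PowerSeries ℚ) (k n : ℕ) :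
    coeff n (a.derivativeFun * a ^ k)
      = (n+1 : ℚ) / (k+1 : ℚ) * coeff (n+1) (a ^ (k+1)) := by
  have hD := Derivation.leibniz_pow (PowerSeries.derivative (R := ℚ)) (a := a) (n := k+1)
  rw [Nat.add_sub_cancel, smul_eq_mul, nsmul_eq_mul] at hD
  have h1 : coeff n (derivativeFun (a ^ (k+1))) = coeff (n+1) (a^(k+1)) * (n+1) :=
    coeff_derivativeFun _ n
  rw [show (PowerSeries.derivative (R := ℚ)) (a ^ (k+1)) = derivativeFun (a ^ (k+1)) from rfl] at hD
  rw [hD] at h1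
  simp only [show (d⁄dX ℚ) a = a.derivativeFun from rfl] at h1
  have h2 : coeff n (((k+1 : ℕ) : PowerSeries ℚ) * (a ^ k * a.derivativeFun))
      = ((k:ℚ)+1) * coeff n (a ^ k * a.derivativeFun) := by
    have : (((k+1:ℕ) : PowerSeries ℚ)) = C ((k:ℚ)+1) := by
      push_cast
      simp [map_add]
    rw [this, coeff_C_mul]
  rw [h2] at h1
  have hk : ((k:ℚ)+1) ≠ 0 := by positivity
  rw [mul_comm a.derivativeFun (a^k)]
  field_simp
  linarith [h1]

theorem derivative_subgroup_mul (f v : PowerSeries ℚ)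
    (hf : PowerSeries.constantCoeff f = 0)
    (hv : PowerSeries.constantCoeff v = 0) (n k : ℕ) :
    ∑ j ∈ Finset.range (n + 1),
        riordanEntry f.derivativeFun f n j * riordanEntry v.derivativeFun v j k
      = riordanEntry (substPS f v).derivativeFun (substPS f v) n k := by
  set g := substPS f v with hg
  have hfac : ∀ m : ℕ, (m.factorial : ℚ) ≠ 0 := fun m => Nat.cast_ne_zero.mpr m.factorial_ne_zero
  -- termwise rewrite of LHS
  have hterm : ∀ j ∈ range (n+1),
      riordanEntry f.derivativeFun f n j * riordanEntry v.derivativeFun v j k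
        = (((n+1).factorial : ℚ) / ((k+1).factorial : ℚ)) *
            (coeff (j+1) (v ^ (k+1)) * coeff (n+1) (f ^ (j+1))) := by
    intro j _
    rw [riordanEntry, riordanEntry, coeff_deriv_mul_pow, coeff_deriv_mul_pow]
    have hj1 : ((j:ℚ)+1) ≠ 0 := by positivity
    have hk1 : ((k:ℚ)+1) ≠ 0 := by positivity
    rw [Nat.factorial_succ, Nat.factorial_succ]
    push_cast
    field_simp
  rw [Finset.sum_congr rfl hterm, ← Finset.mul_sum]
  -- identify the sum with a coefficient of the composition
  have hsum : coeff (n+1) (substPS f (v ^ (k+1)))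
      = ∑ j ∈ range (n+1), coeff (j+1) (v ^ (k+1)) * coeff (n+1) (f ^ (j+1)) := by
    rw [substPS, coeff_mk, Finset.sum_range_succ']
    have h0 : coeff 0 (v ^ (k+1)) = 0 := by
      rw [coeff_zero_eq_constantCoeff, map_pow, hv, zero_pow (Nat.succ_ne_zero k)]
    rw [h0, zero_mul, add_zero]
  rw [← hsum, substPS_pow f hf v (k+1), ← hg]
  -- rewrite RHS
  rw [riordanEntry, coeff_deriv_mul_pow]
  rw [Nat.factorial_succ, Nat.factorial_succ]
  have hk1 : ((k:ℚ)+1) ≠ 0 := by positivity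
  push_cast
  field_simp
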